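/- arXiv:1210.5625 — 4 statements merged into one kernel-verified Lean document; each statement's English description precedes it below -/
import Mathlib

section
/- If A is a fixed point of a quantum channel M on a finite-dimensional Hilbert space, and A = (X₊ - X₋) + i(Y₊ - Y₋) where X₊, X₋, Y₊, Y₋ are positive operators with X₊X₋ = X₋X₊ = Y₊Y₋ = Y₋Y₊ = 0, then each of X₊, X₋, Y₊, Y₋ is also a fixed point of M. -/
open Matrix
open scoped ComplexOrder

noncomputable section

abbrev Mat (d : ℕ) := Matrix (Fin d) (Fin d) ℂ

/-- `K` is a Kraus representation of the linear map `Φ`. -/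
def IsKrausRep {d : ℕ} (Φ : Mat d →ₗ[ℂ] Mat d) {n : ℕ} (K : Fin n → Mat d) : Prop :=
  (∀ A, Φ A = ∑ i, K i * A * (K i)ᴴ) ∧ ∑ i, (K i)ᴴ * K i = 1

/-- A quantum channel: completely positive trace-preserving map, i.e. admitting a Kraus
representation with the normalization condition. -/
def IsCPTP {d : ℕ} (Φ : Mat d →ₗ[ℂ] Mat d) : Prop :=
  ∃ (n : ℕ) (K : Fin n → Mat d), IsKrausRep Φ K

/-- A density matrix: positive semidefinite with unit trace. -/
def IsDensity {d : ℕ} (ρ : Mat d) : Prop := ρ.PosSemidef ∧ ρ.trace = 1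

/-- Ergodicity: the channel has a unique fixed point density matrix. -/
def IsErgodic {d : ℕ} (Φ : Mat d →ₗ[ℂ] Mat d) : Prop :=
  ∃! ρ : Mat d, IsDensity ρ ∧ Φ ρ = ρ

/-- The support of an operator, viewed as a subspace of `ℂ^d`. -/
def supp {d : ℕ} (ρ : Mat d) : Submodule ℂ (Fin d → ℂ) := LinearMap.range ρ.mulVecLin

/-- The trace norm `‖A‖₁ = Tr √(A†A)`. -/
def traceNorm {d : ℕ} (A : Mat d) : ℝ :=
  (((Matrix.posSemidef_conjTranspose_mul_self A).1.eigenvectorUnitary.1 *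
      diagonal (((↑) : ℝ → ℂ) ∘ (√·) ∘ (Matrix.posSemidef_conjTranspose_mul_self A).1.eigenvalues) *
      (star (Matrix.posSemidef_conjTranspose_mul_self A).1.eigenvectorUnitary : Mat d)).trace).re

/-- Mixing: iterates of the channel converge in trace norm to a unique state. -/
def IsMixing {d : ℕ} (Φ : Mat d →ₗ[ℂ] Mat d) : Prop :=
  ∃ ρs : Mat d, IsDensity ρs ∧ ∀ ρ : Mat d, IsDensity ρ →
    Filter.Tendsto (fun k : ℕ => traceNorm ((Φ ^ k) ρ - ρs)) Filter.atTop (nhds 0)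

/-- A subspace `S` is invariant for a channel if every Kraus operator (of any Kraus
representation) maps `S` into itself. -/
def IsInvariantSubspace {d : ℕ} (Φ : Mat d →ₗ[ℂ] Mat d) (S : Submodule ℂ (Fin d → ℂ)) : Prop :=
  ∀ (n : ℕ) (K : Fin n → Mat d), IsKrausRep Φ K → ∀ i, ∀ x ∈ S, (K i).mulVec x ∈ S

/-!
Write `A = X + iY` with `X = X₊ - X₋` and `Y = Y₊ - Y₋` Hermitian. A channel commutes with `ᴴ`,
so it maps Hermitian matrices to Hermitian ones, and `Φ A = A` splits into `Φ X = X` and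
`Φ Y = Y`. For the positive parts, compress by the support projection `Q` of `X₊`:
`Φ X₊ - Φ X₋ = X₊ - X₋` gives `tr Φ X₊ ≥ tr (Q (Φ X₊) Q) ≥ tr (Q (Φ X₊ - Φ X₋) Q) = tr X₊`, and
trace preservation turns these into equalities, which pins down `Φ X₊ = X₊`.
-/

namespace Matrix

variable {𝕜 n : Type*} [RCLike 𝕜] [Fintype n] [DecidableEq n]
open scoped MatrixOrder

/-- As `0⁻¹ = 0`, `x ↦ x⁻¹ * x` is the indicator of `x ≠ 0`, so `Q = cfc (x ↦ x⁻¹ * x) P` is the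
projection onto the range of `P`; being `cfc (·⁻¹) P * P`, it kills whatever `P` kills. -/
lemma IsHermitian.exists_isStarProjection {P : Matrix n n 𝕜} (hP : P.IsHermitian) :
    ∃ Q : Matrix n n 𝕜, IsStarProjection Q ∧ Q * P = P ∧ ∀ N, P * N = 0 → Q * N = 0 := by
  have hcont (f : ℝ → ℝ) : ContinuousOn f (spectrum ℝ P) := P.finite_real_spectrum.continuousOn f
  have hQ : cfc (fun x : ℝ => x⁻¹ * x) P = cfc (fun x : ℝ => x⁻¹) P * P := by
    rw [cfc_mul (fun x : ℝ => x⁻¹) (fun x => x) P (hcont _) (hcont _), cfc_id' ℝ P]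
  refine ⟨cfc (fun x : ℝ => x⁻¹ * x) P, ⟨?_, cfc_predicate _ _⟩, ?_, fun N hN => ?_⟩
  · rw [IsIdempotentElem, ← cfc_mul _ _ _ (hcont _) (hcont _)]
    refine cfc_congr fun x _ => ?_
    by_cases hx : x = 0 <;> simp [hx]
  · calc cfc (fun x : ℝ => x⁻¹ * x) P * P = cfc (fun x : ℝ => x⁻¹ * x * x) P := by
          rw [cfc_mul (fun x : ℝ => x⁻¹ * x) (fun x => x) P (hcont _) (hcont _), cfc_id' ℝ P]
      _ = P := (cfc_congr fun x _ => by by_cases hx : x = 0 <;> simp [hx]).trans (cfc_id' ℝ P)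
  · rw [hQ, Matrix.mul_assoc, hN, Matrix.mul_zero]

lemma PosSemidef.mul_eq_zero_of_trace_mul_mul_eq_zero {C Q : Matrix n n 𝕜} (hC : C.PosSemidef)
    (hQ : Q.IsHermitian) (h : (Q * C * Q).trace = 0) : C * Q = 0 := by
  obtain ⟨D, rfl⟩ := CStarAlgebra.nonneg_iff_eq_star_mul_self.mp hC.nonneg
  rw [star_eq_conjTranspose] at h ⊢
  have hDQ : D * Q = 0 := by
    rw [← trace_conjTranspose_mul_self_eq_zero_iff, conjTranspose_mul, hQ.eq, ← h]
    simp only [Matrix.mul_assoc]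
  rw [Matrix.mul_assoc, hDQ, Matrix.mul_zero]

theorem IsHermitian.eq_of_sub_eq_sub_of_trace_eq {P N B C : Matrix n n 𝕜} (hP : P.IsHermitian)
    (hB : B.PosSemidef) (hC : C.PosSemidef) (hPN : P * N = 0)
    (h : B - C = P - N) (htr : B.trace = P.trace) : B = P := by
  obtain ⟨Q, hQ, hQP, hQN⟩ := hP.exists_isStarProjection
  have hQh : Q.IsHermitian := hQ.isSelfAdjoint
  have hQ'h : (1 - Q).IsHermitian := hQ.one_sub.isSelfAdjoint
  have hPQ : P * Q = P := by simpa [hP.eq, hQh.eq] using congrArg (·ᴴ) hQP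
  have hcompress : Q * B * Q - Q * C * Q = P := by
    rw [← Matrix.sub_mul, ← Matrix.mul_sub, h, Matrix.mul_sub, Matrix.sub_mul,
      hQP, hPQ, hQN N hPN, Matrix.zero_mul, sub_zero]
  have hsplit : (Q * B * Q).trace + ((1 - Q) * B * (1 - Q)).trace = B.trace := by
    rw [trace_mul_cycle, hQ.isIdempotentElem.eq, trace_mul_cycle (1 - Q),
      hQ.one_sub.isIdempotentElem.eq, ← trace_add, ← Matrix.add_mul, add_sub_cancel, Matrix.one_mul]
  have hsum : (Q * C * Q).trace + ((1 - Q) * B * (1 - Q)).trace = 0 := by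
    linear_combination hsplit + htr - congrArg trace hcompress + trace_sub (Q * B * Q) (Q * C * Q)
  have hQCQ_nonneg : 0 ≤ (Q * C * Q).trace := by
    have := (hC.conjTranspose_mul_mul_same Q).trace_nonneg
    rwa [hQh.eq] at this
  have hQ'BQ'_nonneg : 0 ≤ ((1 - Q) * B * (1 - Q)).trace := by
    have := (hB.conjTranspose_mul_mul_same (1 - Q)).trace_nonneg
    rwa [hQ'h.eq] at this
  obtain ⟨hQCQ, hQ'BQ'⟩ := (add_eq_zero_iff_of_nonneg hQCQ_nonneg hQ'BQ'_nonneg).mp hsum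
  have hCQ : C * Q = 0 := hC.mul_eq_zero_of_trace_mul_mul_eq_zero hQh hQCQ
  have hBQ : B * Q = B := by
    simpa [Matrix.mul_sub, sub_eq_zero, eq_comm] using
      hB.mul_eq_zero_of_trace_mul_mul_eq_zero hQ'h hQ'BQ'
  have hQB : Q * B = B := by simpa [hB.1.eq, hQh.eq] using congrArg (·ᴴ) hBQ
  rw [← hcompress, Matrix.mul_assoc Q C, hCQ, Matrix.mul_zero, sub_zero, hQB, hBQ]

theorem PosSemidef.map_eq_of_map_sub_eq_sub {Φ : Matrix n n 𝕜 →ₗ[𝕜] Matrix n n 𝕜}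
    (hpos : ∀ A, A.PosSemidef → (Φ A).PosSemidef) (htr : ∀ A, (Φ A).trace = A.trace)
    {P N : Matrix n n 𝕜} (hP : P.PosSemidef) (hN : N.PosSemidef) (hPN : P * N = 0)
    (hfix : Φ (P - N) = P - N) : Φ P = P ∧ Φ N = N := by
  have hΦP : Φ P = P := hP.1.eq_of_sub_eq_sub_of_trace_eq (hpos P hP) (hpos N hN) hPN
    (by rwa [← map_sub]) (htr P)
  rw [map_sub, hΦP] at hfix
  exact ⟨hΦP, sub_right_injective hfix⟩

end Matrix

section ComplexStarModule

variable {E : Type*} [AddCommGroup E] [Module ℂ E] [StarAddMonoid E] [StarModule ℂ E]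

open scoped ComplexStarModule

lemma IsSelfAdjoint.eq_and_eq_of_add_I_smul_eq {x y x' y' : E} (hx : IsSelfAdjoint x)
    (hy : IsSelfAdjoint y) (hx' : IsSelfAdjoint x') (hy' : IsSelfAdjoint y')
    (h : x + Complex.I • y = x' + Complex.I • y') : x = x' ∧ y = y' := by
  constructor
  · simpa [hx.coe_realPart, hx'.coe_realPart, hy.imaginaryPart, hy'.imaginaryPart] using
      congrArg (fun a => (ℜ a : E)) h
  · simpa [hx.imaginaryPart, hx'.imaginaryPart, hy.coe_realPart, hy'.coe_realPart] using
      congrArg (fun a => (ℑ a : E)) h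

lemma LinearMap.map_eq_of_map_add_I_smul_eq {Φ : E →ₗ[ℂ] E}
    (hΦ : ∀ a, Φ (star a) = star (Φ a)) {x y : E} (hx : IsSelfAdjoint x) (hy : IsSelfAdjoint y)
    (h : Φ (x + Complex.I • y) = x + Complex.I • y) : Φ x = x ∧ Φ y = y := by
  have hself {a : E} (ha : IsSelfAdjoint a) : IsSelfAdjoint (Φ a) :=
    (hΦ a).symm.trans (congrArg Φ ha.star_eq)
  rw [map_add, map_smul] at h
  exact (hself hx).eq_and_eq_of_add_I_smul_eq (hself hy) hx hy h

end ComplexStarModule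

namespace IsKrausRep

variable {d n : ℕ} {Φ : Mat d →ₗ[ℂ] Mat d} {K : Fin n → Mat d}

lemma map_conjTranspose (hK : IsKrausRep Φ K) (A : Mat d) : Φ Aᴴ = (Φ A)ᴴ := by
  simp only [hK.1, conjTranspose_sum, conjTranspose_mul, conjTranspose_conjTranspose,
    Matrix.mul_assoc]

lemma posSemidef_map (hK : IsKrausRep Φ K) {A : Mat d} (hA : A.PosSemidef) :
    (Φ A).PosSemidef := by
  rw [hK.1]
  exact posSemidef_sum _ fun i _ => hA.mul_mul_conjTranspose_same (K i)

lemma trace_map (hK : IsKrausRep Φ K) (A : Mat d) : (Φ A).trace = A.trace := by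
  simp only [hK.1, trace_sum, trace_mul_cycle (K _) A]
  rw [← trace_sum, ← Finset.sum_mul, hK.2, Matrix.one_mul]

end IsKrausRep

theorem fixed_point_positive_parts_general {d : ℕ} (Φ : Mat d →ₗ[ℂ] Mat d) (hΦ : IsCPTP Φ)
    (A Xp Xm Yp Ym : Mat d)
    (hXp : Xp.PosSemidef) (hXm : Xm.PosSemidef) (hYp : Yp.PosSemidef) (hYm : Ym.PosSemidef)
    (hX1 : Xp * Xm = 0) (hY1 : Yp * Ym = 0)
    (hA : A = (Xp - Xm) + Complex.I • (Yp - Ym))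
    (hfix : Φ A = A) :
    Φ Xp = Xp ∧ Φ Xm = Xm ∧ Φ Yp = Yp ∧ Φ Ym = Ym := by
  obtain ⟨n, K, hK⟩ := hΦ
  subst hA
  obtain ⟨hX, hY⟩ := Φ.map_eq_of_map_add_I_smul_eq hK.map_conjTranspose
    (hXp.1.sub hXm.1) (hYp.1.sub hYm.1) hfix
  obtain ⟨hΦXp, hΦXm⟩ :=
    hXp.map_eq_of_map_sub_eq_sub (fun _ => hK.posSemidef_map) hK.trace_map hXm hX1 hX
  obtain ⟨hΦYp, hΦYm⟩ :=
    hYp.map_eq_of_map_sub_eq_sub (fun _ => hK.posSemidef_map) hK.trace_map hYm hY1 hY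
  exact ⟨hΦXp, hΦXm, hΦYp, hΦYm⟩

/-- If `A` is a fixed point of a quantum channel and `A = (X₊ - X₋) + i(Y₊ - Y₋)` with
`X₊, X₋, Y₊, Y₋` positive semidefinite and mutually annihilating pairs, then each of the four
positive parts is also a fixed point. -/
theorem fixed_point_positive_parts {d : ℕ} (Φ : Mat d →ₗ[ℂ] Mat d) (hΦ : IsCPTP Φ)
    (A Xp Xm Yp Ym : Mat d)
    (hXp : Xp.PosSemidef) (hXm : Xm.PosSemidef) (hYp : Yp.PosSemidef) (hYm : Ym.PosSemidef)
    (hX1 : Xp * Xm = 0) (hX2 : Xm * Xp = 0) (hY1 : Yp * Ym = 0) (hY2 : Ym * Yp = 0)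
    (hA : A = (Xp - Xm) + Complex.I • (Yp - Ym))
    (hfix : Φ A = A) :
    Φ Xp = Xp ∧ Φ Xm = Xm ∧ Φ Yp = Yp ∧ Φ Ym = Ym :=
  fixed_point_positive_parts_general Φ hΦ A Xp Xm Yp Ym hXp hXm hYp hYm hX1 hY1 hA hfix
end
end

section
/- If a quantum channel M on a finite-dimensional Hilbert space has two distinct fixed point density matrices, then M has two fixed point density matrices with orthogonal supports. -/
open Matrix
open scoped ComplexOrder

noncomputable section

/-! The difference `δ = ρ₀ - ρ₁` is a nonzero traceless Hermitian fixed point, so its positive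
and negative parts `δ⁺`, `δ⁻` are orthogonal and have the same nonzero trace. Let `P` be the
spectral projection of `δ` onto its positive eigenvalues. Since `P δ P = δ⁺`,
`tr δ⁺ = tr (P Φ(δ⁺) P) - tr (P Φ(δ⁻) P)`, while `tr δ⁺ = tr Φ(δ⁺)` splits as
`tr (P Φ(δ⁺) P) + tr ((1 - P) Φ(δ⁺) (1 - P))`. The two positive compressions
`P Φ(δ⁻) P` and `(1 - P) Φ(δ⁺) (1 - P)` therefore have zero trace and vanish, which forces
`Φ(δ⁺) = δ⁺` and `Φ(δ⁻) = δ⁻`; normalizing `δ⁺` and `δ⁻` gives the two states. -/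

open scoped MatrixOrder

namespace Matrix

variable {n 𝕜 : Type*} [Fintype n] [DecidableEq n] [RCLike 𝕜]

theorem PosSemidef.conjTranspose_mul_mul_eq_zero_iff {A : Matrix n n 𝕜} (hA : A.PosSemidef)
    (B : Matrix n n 𝕜) : Bᴴ * A * B = 0 ↔ A * B = 0 := by
  obtain ⟨S, rfl⟩ : ∃ S : Matrix n n 𝕜, Sᴴ * S = A :=
    ⟨CFC.sqrt A, by rw [(CFC.sqrt_nonneg A).posSemidef.isHermitian.eq,
      CFC.sqrt_mul_sqrt_self A hA.nonneg]⟩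
  rw [conjTranspose_mul_self_mul_eq_zero, ← conjTranspose_mul_self_eq_zero (A := S * B),
    conjTranspose_mul]
  simp only [Matrix.mul_assoc]

theorem trace_conj_add_trace_conj_one_sub {P : Matrix n n 𝕜} (hP : IsStarProjection P)
    (A : Matrix n n 𝕜) : (P * A * P).trace + ((1 - P) * A * (1 - P)).trace = A.trace := by
  rw [trace_mul_cycle, hP.isIdempotentElem.eq, trace_mul_cycle, hP.one_sub.isIdempotentElem.eq,
    ← trace_add, ← Matrix.add_mul, add_sub_cancel, Matrix.one_mul]

theorem exists_isStarProjection_separating_posPart_negPart (A : Matrix n n 𝕜) :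
    ∃ P : Matrix n n 𝕜, IsStarProjection P ∧ A⁺ * P = A⁺ ∧ A⁻ * P = 0 := by
  set χ : ℝ → ℝ := fun x => if 0 < x then 1 else 0
  have hcont (f : ℝ → ℝ) : ContinuousOn f (spectrum ℝ A) := A.finite_real_spectrum.continuousOn f
  refine ⟨cfc χ A, ⟨?_, cfc_predicate χ A⟩, ?_, ?_⟩
  · rw [IsIdempotentElem, ← cfc_mul χ χ A (hcont _) (hcont _)]
    exact cfc_congr fun x _ => by by_cases hx : 0 < x <;> simp [χ, hx]
  · rw [CFC.posPart_def, cfcₙ_eq_cfc, ← cfc_mul _ _ A (hcont _) (hcont _)]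
    refine cfc_congr fun x _ => ?_
    rcases lt_or_ge 0 x with hx | hx
    · simp [χ, hx]
    · simp [χ, hx.not_gt, posPart_eq_zero.mpr hx]
  · rw [CFC.negPart_def, cfcₙ_eq_cfc, ← cfc_mul _ _ A (hcont _) (hcont _),
      ← cfc_zero ℝ A]
    refine cfc_congr fun x _ => ?_
    rcases lt_or_ge 0 x with hx | hx
    · simp [χ, hx, negPart_eq_zero.mpr hx.le]
    · simp [χ, hx.not_gt]

theorem map_eq_self_of_map_sub_eq_self
    {Φ : Matrix n n 𝕜 →ₗ[𝕜] Matrix n n 𝕜} (hpos : ∀ X, X.PosSemidef → (Φ X).PosSemidef)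
    (htr : ∀ X, (Φ X).trace = X.trace) {A B P : Matrix n n 𝕜} (hA : A.PosSemidef)
    (hB : B.PosSemidef) (hP : IsStarProjection P) (hAP : A * P = A) (hBP : B * P = 0)
    (hfix : Φ (A - B) = A - B) : Φ A = A ∧ Φ B = B := by
  have hPH : Pᴴ = P := hP.isSelfAdjoint
  have hQH : (1 - P)ᴴ = 1 - P := hP.one_sub.isSelfAdjoint
  have hPA : P * A = A := by
    simpa only [conjTranspose_mul, hPH, hA.isHermitian.eq] using congrArg conjTranspose hAP
  have hcompress : P * (Φ A - Φ B) * P = A := by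
    rw [← map_sub, hfix, Matrix.mul_sub, Matrix.sub_mul, hPA, hAP, Matrix.mul_assoc P B, hBP,
      Matrix.mul_zero, sub_zero]
  have hQΦAQ := (hpos A hA).conjTranspose_mul_mul_same (1 - P)
  have hPΦBP := (hpos B hB).conjTranspose_mul_mul_same P
  rw [hQH] at hQΦAQ
  rw [hPH] at hPΦBP
  have htrace : ((1 - P) * Φ A * (1 - P)).trace + (P * Φ B * P).trace = 0 := by
    have hsplit := trace_conj_add_trace_conj_one_sub hP (Φ A)
    have hcompress_tr := congrArg trace hcompress
    rw [htr] at hsplit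
    rw [Matrix.mul_sub, Matrix.sub_mul, trace_sub] at hcompress_tr
    linear_combination hsplit - hcompress_tr
  obtain ⟨hQΦAQ_tr, hPΦBP_tr⟩ :=
    (add_eq_zero_iff_of_nonneg hQΦAQ.trace_nonneg hPΦBP.trace_nonneg).1 htrace
  have hΦAQ : Φ A * (1 - P) = 0 := by
    rw [← (hpos A hA).conjTranspose_mul_mul_eq_zero_iff, hQH, ← hQΦAQ.trace_eq_zero_iff, hQΦAQ_tr]
  have hΦBP : Φ B * P = 0 := by
    rw [← (hpos B hB).conjTranspose_mul_mul_eq_zero_iff, hPH, ← hPΦBP.trace_eq_zero_iff, hPΦBP_tr]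
  have hΦA : Φ A = A := calc
    Φ A = Φ A * P := by rwa [Matrix.mul_sub, Matrix.mul_one, sub_eq_zero] at hΦAQ
    _ = (Φ A - Φ B) * P := by rw [Matrix.sub_mul, hΦBP, sub_zero]
    _ = A := by rw [← map_sub, hfix, Matrix.sub_mul, hAP, hBP, sub_zero]
  refine ⟨hΦA, ?_⟩
  rwa [map_sub, hΦA, sub_right_inj] at hfix

end Matrix

namespace IsCPTP

variable {d : ℕ} {Φ : Mat d →ₗ[ℂ] Mat d}

theorem trace_map (hΦ : IsCPTP Φ) (A : Mat d) : (Φ A).trace = A.trace := by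
  obtain ⟨n, K, hΦK, hK⟩ := hΦ
  simp_rw [hΦK, trace_sum, trace_mul_cycle _ A, ← trace_sum, ← Finset.sum_mul, hK, Matrix.one_mul]

theorem posSemidef_map (hΦ : IsCPTP Φ) {A : Mat d} (hA : A.PosSemidef) : (Φ A).PosSemidef := by
  obtain ⟨n, K, hΦK, -⟩ := hΦ
  rw [hΦK]
  exact posSemidef_sum _ fun i _ => hA.mul_mul_conjTranspose_same (K i)

end IsCPTP

theorem Matrix.PosSemidef.isDensity_trace_inv_smul {d : ℕ} {A : Mat d} (hA : A.PosSemidef)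
    (h : A.trace ≠ 0) : IsDensity (A.trace⁻¹ • A) :=
  ⟨hA.smul (inv_nonneg_of_nonneg hA.trace_nonneg),
    by rw [trace_smul, smul_eq_mul, inv_mul_cancel₀ h]⟩

theorem IsCPTP.exists_orthogonal_fixed_states_of_isHermitian {d : ℕ} {Φ : Mat d →ₗ[ℂ] Mat d}
    (hΦ : IsCPTP Φ) {δ : Mat d} (hδ : δ.IsHermitian) (hδ_ne : δ ≠ 0) (hδ_tr : δ.trace = 0)
    (hδ_fix : Φ δ = δ) :
    ∃ σ₀ σ₁ : Mat d, IsDensity σ₀ ∧ IsDensity σ₁ ∧ Φ σ₀ = σ₀ ∧ Φ σ₁ = σ₁ ∧ σ₀ * σ₁ = 0 := by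
  have hδ_split : δ⁺ - δ⁻ = δ := CFC.posPart_sub_negPart δ hδ
  have hpos : δ⁺.PosSemidef := (CFC.posPart_nonneg δ).posSemidef
  have hneg : δ⁻.PosSemidef := (CFC.negPart_nonneg δ).posSemidef
  obtain ⟨P, hP, hposP, hnegP⟩ := exists_isStarProjection_separating_posPart_negPart δ
  obtain ⟨hfix_pos, hfix_neg⟩ := map_eq_self_of_map_sub_eq_self (fun _ => hΦ.posSemidef_map)
    hΦ.trace_map hpos hneg hP hposP hnegP (by rw [hδ_split, hδ_fix])
  have htr : δ⁺.trace = δ⁻.trace := by rw [← sub_eq_zero, ← trace_sub, hδ_split, hδ_tr]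
  have htr_ne : δ⁺.trace ≠ 0 := by
    intro h
    refine hδ_ne ?_
    rw [← hδ_split, hpos.trace_eq_zero_iff.1 h, hneg.trace_eq_zero_iff.1 (htr ▸ h), sub_zero]
  refine ⟨_, _, hpos.isDensity_trace_inv_smul htr_ne, hneg.isDensity_trace_inv_smul (htr ▸ htr_ne),
    by rw [map_smul, hfix_pos], by rw [map_smul, hfix_neg], ?_⟩
  rw [smul_mul_smul_comm, CFC.posPart_mul_negPart, smul_zero]

/-- If a quantum channel has two distinct fixed point density matrices, then it has two fixed
point density matrices with orthogonal supports (i.e. whose product vanishes). -/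
theorem exists_orthogonal_fixed_states {d : ℕ} (Φ : Mat d →ₗ[ℂ] Mat d) (hΦ : IsCPTP Φ)
    (ρ₀ ρ₁ : Mat d) (h₀ : IsDensity ρ₀) (h₁ : IsDensity ρ₁)
    (hf₀ : Φ ρ₀ = ρ₀) (hf₁ : Φ ρ₁ = ρ₁) (hne : ρ₀ ≠ ρ₁) :
    ∃ σ₀ σ₁ : Mat d, IsDensity σ₀ ∧ IsDensity σ₁ ∧ Φ σ₀ = σ₀ ∧ Φ σ₁ = σ₁ ∧ σ₀ * σ₁ = 0 :=
  hΦ.exists_orthogonal_fixed_states_of_isHermitian (h₀.1.isHermitian.sub h₁.1.isHermitian)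
    (sub_ne_zero.mpr hne) (by rw [trace_sub, h₀.2, h₁.2, sub_self])
    (by rw [map_sub, hf₀, hf₁])
end
end

section
/- Let ρ and σ be density matrices on a finite-dimensional Hilbert space. There exist q ∈ (0,1] and a density matrix τ with ρ = q σ + (1-q) τ if and only if the support of σ is contained in the support of ρ. -/
open Matrix
open scoped ComplexOrder

noncomputable section

/-!
Both sides are equivalent to `ker ρ ≤ ker σ`. A decomposition gives `q σ ≤ ρ`, hence
`ker ρ ≤ ker σ`. Conversely, let `P = ρ ρ⁺` be the support projection of `ρ`, built by functional
calculus. If `ker ρ ≤ ker σ` then `σ = P σ P ≤ c P ≤ c M ρ`, the last step because the nonzero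
spectrum of `ρ` is bounded away from `0`; so `σ ≤ C ρ` with `C > 1`, and
`τ = (C ρ - σ) / (C - 1)` works with `q = C⁻¹`. For Hermitian matrices `ker ρ ≤ ker σ` is
equivalent to `supp σ ≤ supp ρ`; one direction is `σ = P σ = ρ (ρ⁺ σ)`.
-/

open scoped MatrixOrder

namespace Matrix

section Kernel

variable {R l m n p : Type*} [CommRing R] [Fintype n] [Fintype p] [DecidableEq p]

lemma mul_eq_zero_of_ker_le {A : Matrix l n R} {B : Matrix m n R}
    (h : LinearMap.ker A.mulVecLin ≤ LinearMap.ker B.mulVecLin) {M : Matrix n p R}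
    (hM : A * M = 0) : B * M = 0 := by
  refine ext_of_mulVec_single fun j => ?_
  rw [← mulVec_mulVec, zero_mulVec]
  exact h (by rw [LinearMap.mem_ker, mulVecLin_apply, mulVec_mulVec, hM, zero_mulVec])

end Kernel

variable {n 𝕜 : Type*} [Fintype n] [RCLike 𝕜] {A B : Matrix n n 𝕜}

lemma ker_mulVecLin_le_of_le (hB : 0 ≤ B) (hBA : B ≤ A) :
    LinearMap.ker A.mulVecLin ≤ LinearMap.ker B.mulVecLin := by
  intro x hx
  have hAx : A *ᵥ x = 0 := hx
  have hle : star x ⬝ᵥ B *ᵥ x ≤ 0 := by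
    simpa [sub_mulVec, hAx] using (le_iff.mp hBA).dotProduct_mulVec_nonneg x
  exact ((nonneg_iff_posSemidef.mp hB).dotProduct_mulVec_zero_iff x).mp
    (le_antisymm hle ((nonneg_iff_posSemidef.mp hB).dotProduct_mulVec_nonneg x))

lemma ker_mulVecLin_le_of_smul_le (hB : 0 ≤ B) {c : ℝ} (hc : 0 < c) (h : c • B ≤ A) :
    LinearMap.ker A.mulVecLin ≤ LinearMap.ker B.mulVecLin := by
  intro x hx
  simpa [hc.ne'] using ker_mulVecLin_le_of_le (smul_nonneg hc.le hB) h hx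

lemma ker_le_of_range_mulVecLin_le (hA : A.IsHermitian) (hB : B.IsHermitian)
    (h : LinearMap.range B.mulVecLin ≤ LinearMap.range A.mulVecLin) :
    LinearMap.ker A.mulVecLin ≤ LinearMap.ker B.mulVecLin := by
  intro x hx
  have hAx : A *ᵥ x = 0 := hx
  obtain ⟨z, hz⟩ := h ⟨B *ᵥ x, rfl⟩
  have hz : A *ᵥ z = B *ᵥ (B *ᵥ x) := hz
  -- `‖B x‖² = ⟪x, B (B x)⟫ = ⟪x, A z⟫ = ⟪A x, z⟫ = 0`
  have : star (B *ᵥ x) ⬝ᵥ B *ᵥ x = 0 := by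
    rw [star_mulVec, ← dotProduct_mulVec, hB.eq, ← hz, dotProduct_mulVec, ← hA.eq,
      ← star_mulVec, hAx, star_zero, zero_dotProduct]
  exact LinearMap.mem_ker.mpr (dotProduct_star_self_eq_zero.mp this)

lemma exists_convex_decomposition_of_le_smul {ρ σ : Matrix n n 𝕜} (hρ : ρ.trace = 1)
    (hσ : σ.trace = 1) {C : ℝ} (hC : 1 < C) (h : σ ≤ C • ρ) :
    ∃ τ : Matrix n n 𝕜, τ.PosSemidef ∧ τ.trace = 1 ∧ ρ = C⁻¹ • σ + (1 - C⁻¹) • τ := by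
  have hC₁ : C - 1 ≠ 0 := sub_ne_zero.mpr hC.ne'
  refine ⟨(C - 1)⁻¹ • (C • ρ - σ), (le_iff.mp h).smul (inv_nonneg.mpr (sub_nonneg.mpr hC.le)),
    ?_, ?_⟩
  · have : (C - 1 : 𝕜) ≠ 0 := mod_cast hC₁
    simp only [trace_smul, trace_sub, hρ, hσ, RCLike.real_smul_eq_coe_mul, mul_one]
    push_cast
    field_simp
  · have : C ≠ 0 := by positivity
    match_scalars
    · field_simp
    · field_simp
      ring

variable [DecidableEq n]

lemma continuousOn_spectrum_real (A : Matrix n n 𝕜) (f : ℝ → ℝ) :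
    ContinuousOn f (spectrum ℝ A) :=
  A.finite_real_spectrum.continuousOn f

/-- The orthogonal projection onto the range of a Hermitian matrix: `t * t⁻¹` is the indicator
of `t ≠ 0`, as `0⁻¹ = 0`. -/
def supportProj (A : Matrix n n 𝕜) : Matrix n n 𝕜 := cfc (fun t : ℝ => t * t⁻¹) A

lemma isSelfAdjoint_supportProj (A : Matrix n n 𝕜) : IsSelfAdjoint (supportProj A) :=
  cfc_predicate _ A

lemma isIdempotentElem_supportProj (A : Matrix n n 𝕜) : IsIdempotentElem (supportProj A) := by
  rw [IsIdempotentElem, supportProj,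
    ← cfc_mul _ _ _ (continuousOn_spectrum_real A _) (continuousOn_spectrum_real A _)]
  refine cfc_congr fun t _ => ?_
  rcases eq_or_ne t 0 with rfl | ht <;> simp [*]

lemma mul_cfc_inv (hA : A.IsHermitian) : A * cfc (·⁻¹ : ℝ → ℝ) A = supportProj A := by
  rw [supportProj, cfc_mul (fun t => t) _ A (continuousOn_spectrum_real A _)
    (continuousOn_spectrum_real A _), cfc_id' ℝ A hA.isSelfAdjoint]

lemma mul_supportProj (hA : A.IsHermitian) : A * supportProj A = A := by
  calc A * supportProj A = cfc (fun t : ℝ => t * (t * t⁻¹)) A := by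
        rw [cfc_mul (fun t => t) _ A (continuousOn_spectrum_real A _)
          (continuousOn_spectrum_real A _), cfc_id' ℝ A hA.isSelfAdjoint, supportProj]
    _ = A := by
        simp_rw [← mul_assoc, mul_self_mul_inv]
        exact cfc_id' ℝ A hA.isSelfAdjoint

lemma mul_supportProj_of_ker_le (hA : A.IsHermitian)
    (h : LinearMap.ker A.mulVecLin ≤ LinearMap.ker B.mulVecLin) : B * supportProj A = B := by
  have : B * (1 - supportProj A) = 0 :=
    mul_eq_zero_of_ker_le h (by rw [mul_sub, mul_one, mul_supportProj hA, sub_self])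
  rwa [mul_sub, mul_one, sub_eq_zero, eq_comm] at this

lemma supportProj_mul_of_ker_le (hA : A.IsHermitian) (hB : B.IsHermitian)
    (h : LinearMap.ker A.mulVecLin ≤ LinearMap.ker B.mulVecLin) : supportProj A * B = B := by
  simpa [hB.isSelfAdjoint.star_eq, (isSelfAdjoint_supportProj A).star_eq] using
    congr_arg star (mul_supportProj_of_ker_le hA h)

lemma range_mulVecLin_le_of_ker_le (hA : A.IsHermitian) (hB : B.IsHermitian)
    (h : LinearMap.ker A.mulVecLin ≤ LinearMap.ker B.mulVecLin) :
    LinearMap.range B.mulVecLin ≤ LinearMap.range A.mulVecLin := by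
  rintro _ ⟨x, rfl⟩
  refine ⟨(cfc (·⁻¹ : ℝ → ℝ) A * B) *ᵥ x, ?_⟩
  simp [mulVec_mulVec, ← Matrix.mul_assoc, mul_cfc_inv hA, supportProj_mul_of_ker_le hA hB h]

lemma range_mulVecLin_le_iff_ker_le (hA : A.IsHermitian) (hB : B.IsHermitian) :
    LinearMap.range B.mulVecLin ≤ LinearMap.range A.mulVecLin ↔
      LinearMap.ker A.mulVecLin ≤ LinearMap.ker B.mulVecLin :=
  ⟨ker_le_of_range_mulVecLin_le hA hB, range_mulVecLin_le_of_ker_le hA hB⟩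

lemma IsHermitian.exists_le_smul_one (hB : B.IsHermitian) :
    ∃ c : ℝ, 0 ≤ c ∧ B ≤ c • (1 : Matrix n n 𝕜) := by
  obtain ⟨c, hc⟩ := B.finite_real_spectrum.bddAbove
  refine ⟨max c 0, le_max_right c 0, ?_⟩
  rw [← Algebra.algebraMap_eq_smul_one]
  exact le_algebraMap_of_spectrum_le (fun t ht => (hc ht).trans (le_max_left c 0))
    hB.isSelfAdjoint

lemma PosSemidef.exists_supportProj_le_smul (hA : A.PosSemidef) :
    ∃ M : ℝ, supportProj A ≤ M • A := by
  obtain ⟨M, hM⟩ := (A.finite_real_spectrum.image (·⁻¹)).bddAbove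
  refine ⟨M, ?_⟩
  rw [← cfc_const_mul_id M A hA.isHermitian.isSelfAdjoint, supportProj]
  refine cfc_mono (fun t ht => ?_) (continuousOn_spectrum_real A _)
    (continuousOn_spectrum_real A _)
  rcases (spectrum_nonneg_of_nonneg hA.nonneg ht).eq_or_lt with rfl | ht₀
  · simp
  · calc t * t⁻¹ = t⁻¹ * t := mul_comm _ _
      _ ≤ M * t := by
        gcongr
        exact hM ⟨t, ht, rfl⟩

lemma exists_le_smul_of_ker_le (hA : A.PosSemidef) (hB : B.IsHermitian)
    (h : LinearMap.ker A.mulVecLin ≤ LinearMap.ker B.mulVecLin) : ∃ C : ℝ, B ≤ C • A := by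
  obtain ⟨c, hc, hBc⟩ := hB.exists_le_smul_one
  obtain ⟨M, hPM⟩ := hA.exists_supportProj_le_smul
  have hP := isSelfAdjoint_supportProj A
  refine ⟨c * M, ?_⟩
  calc B = star (supportProj A) * B * supportProj A := by
        rw [hP.star_eq, Matrix.mul_assoc, mul_supportProj_of_ker_le hA.isHermitian h,
          supportProj_mul_of_ker_le hA.isHermitian hB h]
    _ ≤ star (supportProj A) * (c • 1) * supportProj A := star_left_conjugate_le_conjugate hBc _
    _ = c • supportProj A := by
        rw [hP.star_eq, mul_smul_comm, mul_one, smul_mul_assoc, (isIdempotentElem_supportProj A).eq]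
    _ ≤ c • M • A := smul_le_smul_of_nonneg_left hPM hc
    _ = (c * M) • A := smul_smul c M A

end Matrix

/-- For density matrices `ρ, σ`: `ρ = q σ + (1-q) τ` for some `q ∈ (0,1]` and density matrix
`τ` if and only if the support of `σ` is contained in the support of `ρ`. -/
theorem convex_component_iff_supp_le {d : ℕ} (ρ σ : Mat d)
    (hρ : IsDensity ρ) (hσ : IsDensity σ) :
    (∃ q : ℝ, 0 < q ∧ q ≤ 1 ∧ ∃ τ : Mat d, IsDensity τ ∧
      ρ = (q : ℂ) • σ + ((1 - q : ℝ) : ℂ) • τ) ↔ supp σ ≤ supp ρ := by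
  rw [supp, supp, range_mulVecLin_le_iff_ker_le hρ.1.isHermitian hσ.1.isHermitian]
  simp only [Complex.coe_smul]
  constructor
  · rintro ⟨q, hq, hq1, τ, hτ, rfl⟩
    exact ker_mulVecLin_le_of_smul_le hσ.1.nonneg hq
      (le_add_of_nonneg_right (hτ.1.smul (sub_nonneg.mpr hq1)).nonneg)
  · intro h
    obtain ⟨C, hσC⟩ := exists_le_smul_of_ker_le hρ.1 hσ.1.isHermitian h
    have hC : 1 < max C 2 := one_lt_two.trans_le (le_max_right C 2)
    obtain ⟨τ, hτ, hτ1, hρτ⟩ := exists_convex_decomposition_of_le_smul hρ.2 hσ.2 hC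
      (hσC.trans (smul_le_smul_of_nonneg_right (le_max_left C 2) hρ.1.nonneg))
    exact ⟨(max C 2)⁻¹, by positivity, inv_le_one_of_one_le₀ hC.le, τ, ⟨hτ, hτ1⟩, hρτ⟩
end
end

section
/- Let M be a quantum channel with fixed point state ρ*. If ω ∈ ℂ with |ω| = 1 is an eigenvalue of the adjoint M† with eigenvector A, then ω̄ is an eigenvalue of M with eigenvector A ρ*. Conversely, if ρ* > 0 is strictly positive and M(Ã) = ω̄ Ã for some nonzero Ã, then M†(Ã ρ*⁻¹) = ω Ã ρ*⁻¹. -/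
open Matrix
open scoped ComplexOrder

noncomputable section

/-!
For a matrix `B` and a scalar `c`, the Kraus operators of `Φ` satisfy
`∑ᵢ (Kᵢ B - c B Kᵢ)ᴴ (Kᵢ B - c B Kᵢ) = BᴴB - c BᴴΦd(B) - c̄ Φd(B)ᴴB + |c|² Φd(BᴴB)`.
Multiply by the fixed state `ρ` and take traces: the left side is a sum of nonnegative terms,
and for `|c| = 1` the right side vanishes as soon as `tr (Φd(B)ᴴ B ρ) = c tr (BᴴB ρ)`.
This holds with `c = ω̄` both for an eigenvector `B` of `Φd` and, by duality, for `B = Ã ρ⁻¹`.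
Hence `Kᵢ B ρ = ω̄ B Kᵢ ρ` for all `i`, which turns `Φ(Bρ)` into `ω̄ B Φ(ρ) = ω̄ Bρ`, and,
once `ρ` is invertible, gives `B Kᵢ = ω Kᵢ B` and so `Φd(B) = ∑ᵢ Kᵢᴴ Kᵢ ω B = ω B`.
-/

namespace Matrix

variable {𝕜 m n : Type*} [RCLike 𝕜] [Fintype m] [Fintype n] {A : Matrix n n 𝕜}

theorem IsHermitian.trace_conjTranspose_mul_mul (hA : A.IsHermitian) (X Y : Matrix n n 𝕜) :
    (Xᴴ * Y * A).trace = star (Yᴴ * X * A).trace := by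
  rw [← trace_conjTranspose, conjTranspose_mul, conjTranspose_mul, conjTranspose_conjTranspose,
    hA.eq, trace_mul_comm]

namespace PosSemidef

theorem trace_conjTranspose_mul_mul_nonneg (hA : A.PosSemidef) (Z : Matrix m n 𝕜) :
    0 ≤ (Zᴴ * Z * A).trace := by
  rw [Matrix.mul_assoc, trace_mul_comm]
  exact (hA.mul_mul_conjTranspose_same Z).trace_nonneg

theorem trace_conjTranspose_mul_mul_eq_zero_iff (hA : A.PosSemidef) (Z : Matrix m n 𝕜) :
    (Zᴴ * Z * A).trace = 0 ↔ Z * A = 0 := by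
  classical
  open scoped MatrixOrder in
  obtain ⟨S, rfl⟩ := CStarAlgebra.nonneg_iff_eq_star_mul_self.mp hA.nonneg
  rw [star_eq_conjTranspose]
  refine ⟨fun h => ?_, fun h => by rw [Matrix.mul_assoc, h, Matrix.mul_zero, trace_zero]⟩
  have hZS : Z * Sᴴ = 0 := by
    rw [← trace_conjTranspose_mul_self_eq_zero_iff, ← h, conjTranspose_mul,
      conjTranspose_conjTranspose, Matrix.mul_assoc, trace_mul_comm]
    simp only [Matrix.mul_assoc]
  rw [← Matrix.mul_assoc, hZS, Matrix.zero_mul]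

end PosSemidef

end Matrix

open ComplexConjugate

def IsHSAdjoint {d : ℕ} (Φ Φd : Mat d →ₗ[ℂ] Mat d) : Prop :=
  ∀ A B : Mat d, (Aᴴ * Φ B).trace = ((Φd A)ᴴ * B).trace

namespace IsKrausRep

variable {d n : ℕ} {Φ Φd : Mat d →ₗ[ℂ] Mat d} {K : Fin n → Mat d}

theorem adjoint_apply (hK : IsKrausRep Φ K) (hadj : IsHSAdjoint Φ Φd) (A : Mat d) :
    Φd A = ∑ i, (K i)ᴴ * A * K i := by
  have hconj : (Φd A)ᴴ = ∑ i, (K i)ᴴ * Aᴴ * K i := by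
    refine ext_iff_trace_mul_right.2 fun B => ?_
    rw [← hadj, hK.1, Matrix.mul_sum, Finset.sum_mul, trace_sum, trace_sum]
    refine Finset.sum_congr rfl fun i _ => ?_
    rw [← Matrix.mul_assoc, trace_mul_cycle]
    simp only [Matrix.mul_assoc]
  rw [← conjTranspose_conjTranspose (Φd A), hconj, conjTranspose_sum]
  simp only [conjTranspose_mul, conjTranspose_conjTranspose, Matrix.mul_assoc]

theorem adjoint_conjTranspose (hK : IsKrausRep Φ K) (hadj : IsHSAdjoint Φ Φd) (A : Mat d) :
    Φd Aᴴ = (Φd A)ᴴ := by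
  simp only [hK.adjoint_apply hadj, conjTranspose_sum, conjTranspose_mul,
    conjTranspose_conjTranspose, Matrix.mul_assoc]

theorem trace_adjoint_mul (hK : IsKrausRep Φ K) (hadj : IsHSAdjoint Φ Φd) (A B : Mat d) :
    (Φd A * B).trace = (A * Φ B).trace := by
  rw [← conjTranspose_conjTranspose A, hadj, hK.adjoint_conjTranspose hadj]

theorem sum_conjTranspose_mul_self_sub_smul (hK : IsKrausRep Φ K) (hadj : IsHSAdjoint Φ Φd)
    (c : ℂ) (B : Mat d) :
    ∑ i, (K i * B - c • (B * K i))ᴴ * (K i * B - c • (B * K i)) =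
      Bᴴ * B - c • (Bᴴ * Φd B) - conj c • ((Φd B)ᴴ * B) + (conj c * c) • Φd (Bᴴ * B) := by
  have hterm : ∀ i, (K i * B - c • (B * K i))ᴴ * (K i * B - c • (B * K i)) =
      Bᴴ * ((K i)ᴴ * K i) * B - c • (Bᴴ * ((K i)ᴴ * B * K i))
        - conj c • ((K i)ᴴ * Bᴴ * K i * B) + (conj c * c) • ((K i)ᴴ * (Bᴴ * B) * K i) := by
    intro i
    simp only [conjTranspose_sub, conjTranspose_smul, conjTranspose_mul, Matrix.sub_mul,
      Matrix.mul_sub, Matrix.smul_mul, Matrix.mul_smul, Matrix.mul_assoc, RCLike.star_def]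
    module
  rw [Finset.sum_congr rfl fun i _ => hterm i, ← hK.adjoint_conjTranspose hadj]
  simp only [Finset.sum_add_distrib, Finset.sum_sub_distrib, ← Finset.smul_sum,
    hK.adjoint_apply hadj, ← Finset.mul_sum, ← Finset.sum_mul, hK.2, Matrix.mul_one]

theorem mul_mul_eq_smul_mul_mul_of_trace_eq (hK : IsKrausRep Φ K)
    (hadj : IsHSAdjoint Φ Φd) {ρ : Mat d} (hρ : ρ.PosSemidef) (hfix : Φ ρ = ρ)
    {c : ℂ} (hc : ‖c‖ = 1) {B : Mat d}
    (hB : ((Φd B)ᴴ * B * ρ).trace = c * (Bᴴ * B * ρ).trace) (i : Fin n) :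
    K i * B * ρ = c • (B * K i * ρ) := by
  set t := (Bᴴ * B * ρ).trace
  have hcc : conj c * c = 1 := by rw [Complex.conj_mul', hc]; norm_num
  have ht : star t = t := (hρ.1.trace_conjTranspose_mul_mul B B).symm
  have hB' : (Bᴴ * Φd B * ρ).trace = conj c * t := by
    rw [hρ.1.trace_conjTranspose_mul_mul, hB, star_mul', ht]; rfl
  have hsum : ∑ i, ((K i * B - c • (B * K i))ᴴ * (K i * B - c • (B * K i)) * ρ).trace = 0 := by
    rw [← trace_sum, ← Finset.sum_mul, hK.sum_conjTranspose_mul_self_sub_smul hadj]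
    simp only [Matrix.add_mul, Matrix.sub_mul, Matrix.smul_mul, trace_add, trace_sub, trace_smul,
      smul_eq_mul, hB', hB, hK.trace_adjoint_mul hadj, hfix]
    linear_combination (-t) * hcc
  have hi := (Finset.sum_eq_zero_iff_of_nonneg fun i _ =>
    hρ.trace_conjTranspose_mul_mul_nonneg _).1 hsum i (Finset.mem_univ i)
  rwa [hρ.trace_conjTranspose_mul_mul_eq_zero_iff, Matrix.sub_mul, sub_eq_zero,
    Matrix.smul_mul] at hi

theorem map_mul_eq_conj_smul_of_adjoint_eq_smul (hK : IsKrausRep Φ K)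
    (hadj : IsHSAdjoint Φ Φd) {ρ : Mat d} (hρ : ρ.PosSemidef) (hfix : Φ ρ = ρ)
    {ω : ℂ} (hω : ‖ω‖ = 1) {A : Mat d}
    (hA : Φd A = ω • A) : Φ (A * ρ) = conj ω • (A * ρ) := by
  have hAρ : ((Φd A)ᴴ * A * ρ).trace = conj ω * (Aᴴ * A * ρ).trace := by
    rw [hA, conjTranspose_smul, Matrix.smul_mul, Matrix.smul_mul, trace_smul]; rfl
  have hcomm := hK.mul_mul_eq_smul_mul_mul_of_trace_eq hadj hρ hfix (by simpa using hω) hAρ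
  calc Φ (A * ρ) = ∑ i, K i * A * ρ * (K i)ᴴ := by
        rw [hK.1]; simp only [Matrix.mul_assoc]
    _ = ∑ i, conj ω • (A * (K i * ρ * (K i)ᴴ)) := by
        simp only [hcomm, Matrix.smul_mul, Matrix.mul_assoc]
    _ = conj ω • (A * ρ) := by
        rw [← Finset.smul_sum, ← Matrix.mul_sum, ← hK.1, hfix]

theorem adjoint_mul_inv_eq_smul_of_map_eq_conj_smul (hK : IsKrausRep Φ K)
    (hadj : IsHSAdjoint Φ Φd) {ρ : Mat d} (hρ : ρ.PosDef) (hfix : Φ ρ = ρ)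
    {ω : ℂ} (hω : ‖ω‖ = 1) {A : Mat d}
    (hA : Φ A = conj ω • A) : Φd (A * ρ⁻¹) = ω • (A * ρ⁻¹) := by
  set B := A * ρ⁻¹
  have hBρ : B * ρ = A := nonsing_inv_mul_cancel_right _ _ ((isUnit_iff_isUnit_det ρ).1 hρ.isUnit)
  have hBρ' : ((Φd B)ᴴ * B * ρ).trace = conj ω * (Bᴴ * B * ρ).trace := by
    rw [Matrix.mul_assoc, hBρ, ← hadj, hA, Matrix.mul_smul, trace_smul, ← hBρ,
      ← Matrix.mul_assoc]; rfl
  have hcomm (i : Fin n) : B * K i = ω • (K i * B) := by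
    have hKB := hK.mul_mul_eq_smul_mul_mul_of_trace_eq hadj hρ.posSemidef hfix
      (by simpa using hω) hBρ' i
    rw [← Matrix.smul_mul, hρ.isUnit.mul_left_inj] at hKB
    rw [hKB, smul_smul, Complex.mul_conj', hω]
    simp
  rw [hK.adjoint_apply hadj]
  calc ∑ i, (K i)ᴴ * B * K i = ∑ i, ω • ((K i)ᴴ * K i * B) := by
        simp only [Matrix.mul_assoc, hcomm, Matrix.mul_smul]
    _ = ω • B := by
        rw [← Finset.smul_sum, ← Finset.sum_mul, hK.2, Matrix.one_mul]

end IsKrausRep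

/-- Peripheral eigenvectors of the adjoint map give peripheral eigenvectors of the channel by
multiplication with the fixed point state, and conversely when the fixed point is faithful. -/
theorem peripheral_eigenvector_adjoint_correspondence {d : ℕ} (Φ Φd : Mat d →ₗ[ℂ] Mat d)
    (hΦ : IsCPTP Φ) (hadj : ∀ A B : Mat d, (Aᴴ * Φ B).trace = ((Φd A)ᴴ * B).trace)
    (ρs : Mat d) (hρs : IsDensity ρs) (hfix : Φ ρs = ρs)
    (ω : ℂ) (hω : ‖ω‖ = 1) :
    (∀ A : Mat d, A ≠ 0 → Φd A = ω • A →
      Φ (A * ρs) = (starRingEnd ℂ ω) • (A * ρs)) ∧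
    (ρs.PosDef → ∀ At : Mat d, At ≠ 0 → Φ At = (starRingEnd ℂ ω) • At →
      Φd (At * ρs⁻¹) = ω • (At * ρs⁻¹)) := by
  obtain ⟨n, K, hK⟩ := hΦ
  exact ⟨fun A _ hA => hK.map_mul_eq_conj_smul_of_adjoint_eq_smul hadj hρs.1 hfix hω hA,
    fun hρ At _ hAt => hK.adjoint_mul_inv_eq_smul_of_map_eq_conj_smul hadj hρ hfix hω hAt⟩
end
end
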